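/- arXiv:1502.03811 — 6 statements merged into one kernel-verified Lean document; each statement's English description precedes it below -/
import Mathlib

section
/- Let d ≥ 2 and r ≥ 1. There exists a constant C > 0 with the following property. For all g, m ∈ GL(d,ℝ) with ‖m‖ ≤ r and ‖m⁻¹‖ ≤ r, for every singular value decomposition g = k·diag(α)·k' of g, and for every singular value decomposition g·m = κ·diag(β)·κ'' of g·m, one has sin∠(k·e₁, κ·e₁) ≤ C · (α 1)/(α 0). -/
/-!
Write `g = k D k'` and `g m = κ D' κ''` with `D = diag α`, `D' = diag β`, and let `x = κ''ᵀ e₁`,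
so that `g m x = β₀ κ e₁`. On the other hand `g m x = k D y` with `y = k' m x`, `‖y‖ ≤ r`; the
angle between `k e₁` and `κ e₁` is therefore the angle between `e₁` and `z = D y`, whose sine
times `‖z‖ = β₀` is the distance from `z` to the line `ℝ e₁`, at most `α₁ ‖y‖`. Finally the top
singular value is the operator norm, so `α₀ = ‖g‖ ≤ ‖g m‖ ‖m⁻¹‖ ≤ β₀ r`, and
`sin ≤ α₁ r / β₀ ≤ r² α₁ / α₀`.
-/

open Matrix

/-- The operator norm of a `d × d` real matrix acting on Euclidean `ℝ^d`. -/
noncomputable def opNorm {d : ℕ} (M : Matrix (Fin d) (Fin d) ℝ) : ℝ :=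
  ‖LinearMap.toContinuousLinearMap (Matrix.toEuclideanLin M)‖

/-- The action of a `d × d` real matrix on Euclidean `ℝ^d`. -/
noncomputable def appE {d : ℕ} (M : Matrix (Fin d) (Fin d) ℝ)
    (v : EuclideanSpace ℝ (Fin d)) : EuclideanSpace ℝ (Fin d) :=
  Matrix.toEuclideanLin M v

/-- `IsSVD g k α k'` means `g = k · diag(α) · k'` is a singular value decomposition:
`k, k'` are orthogonal and `α` is positive and nonincreasing. -/
def IsSVD {d : ℕ} (g k : Matrix (Fin d) (Fin d) ℝ) (α : Fin d → ℝ)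
    (k' : Matrix (Fin d) (Fin d) ℝ) : Prop :=
  k * kᵀ = 1 ∧ k' * k'ᵀ = 1 ∧ (∀ i, 0 < α i) ∧ Antitone α ∧
    g = k * Matrix.diagonal α * k'

/-- The sine of the angle between two vectors of Euclidean `ℝ^d`. -/
noncomputable def sinAngle {d : ℕ} (u v : EuclideanSpace ℝ (Fin d)) : ℝ :=
  Real.sin (InnerProductGeometry.angle u v)

/-- The first standard basis vector of Euclidean `ℝ^d`. -/
noncomputable def e1 {d : ℕ} (h : 0 < d) : EuclideanSpace ℝ (Fin d) :=
  EuclideanSpace.single ⟨0, h⟩ 1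

open scoped RealInnerProductSpace
open InnerProductGeometry

lemma sin_angle_mul_norm_le_norm_sub_smul {V : Type*} [NormedAddCommGroup V]
    [InnerProductSpace ℝ V] {u : V} (hu : ‖u‖ = 1) (z : V) (c : ℝ) :
    Real.sin (angle u z) * ‖z‖ ≤ ‖z - c • u‖ := by
  have hsin : Real.sin (angle u z) * ‖z‖ = √(‖z‖ ^ 2 - ⟪u, z⟫ ^ 2) := by
    have := sin_angle_mul_norm_mul_norm u z
    rw [hu, one_mul, real_inner_self_eq_norm_sq, hu, real_inner_self_eq_norm_sq] at this
    simpa [sq] using this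
  rw [hsin, Real.sqrt_le_left (norm_nonneg _), norm_sub_sq_real, inner_smul_right, norm_smul,
    hu, real_inner_comm, mul_one, Real.norm_eq_abs, sq_abs]
  nlinarith [sq_nonneg (c - ⟪z, u⟫)]

variable {d : ℕ}

lemma appE_eq_toEuclideanCLM (M : Matrix (Fin d) (Fin d) ℝ) (v : EuclideanSpace ℝ (Fin d)) :
    appE M v = toEuclideanCLM (𝕜 := ℝ) M v :=
  rfl

lemma appE_mul (M N : Matrix (Fin d) (Fin d) ℝ) (v : EuclideanSpace ℝ (Fin d)) :
    appE (M * N) v = appE M (appE N v) := by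
  rw [appE_eq_toEuclideanCLM, appE_eq_toEuclideanCLM, appE_eq_toEuclideanCLM, map_mul]
  rfl

lemma appE_one (v : EuclideanSpace ℝ (Fin d)) : appE 1 v = v := by
  simp [appE_eq_toEuclideanCLM]

lemma appE_smul (M : Matrix (Fin d) (Fin d) ℝ) (c : ℝ) (v : EuclideanSpace ℝ (Fin d)) :
    appE M (c • v) = c • appE M v :=
  map_smul _ c v

lemma norm_appE_le (M : Matrix (Fin d) (Fin d) ℝ) (v : EuclideanSpace ℝ (Fin d)) :
    ‖appE M v‖ ≤ opNorm M * ‖v‖ :=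
  (toEuclideanCLM (𝕜 := ℝ) M).le_opNorm v

lemma opNorm_mul_le (M N : Matrix (Fin d) (Fin d) ℝ) :
    opNorm (M * N) ≤ opNorm M * opNorm N := by
  change ‖toEuclideanCLM (𝕜 := ℝ) (M * N)‖ ≤ _
  rw [map_mul]
  exact norm_mul_le _ _

section Orthogonal

variable {k : Matrix (Fin d) (Fin d) ℝ}

lemma toEuclideanCLM_mem_unitary (hk : k * kᵀ = 1) :
    toEuclideanCLM (𝕜 := ℝ) k ∈
      unitary (EuclideanSpace ℝ (Fin d) →L[ℝ] EuclideanSpace ℝ (Fin d)) :=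
  Unitary.map_mem _ ((mem_orthogonalGroup_iff _ _).2 hk)

lemma norm_appE_of_mul_transpose_eq_one (hk : k * kᵀ = 1) (v : EuclideanSpace ℝ (Fin d)) :
    ‖appE k v‖ = ‖v‖ :=
  ContinuousLinearMap.norm_map_of_mem_unitary (toEuclideanCLM_mem_unitary hk) v

lemma angle_appE_of_mul_transpose_eq_one (hk : k * kᵀ = 1) (u v : EuclideanSpace ℝ (Fin d)) :
    angle (appE k u) (appE k v) = angle u v := by
  unfold angle
  rw [norm_appE_of_mul_transpose_eq_one hk, norm_appE_of_mul_transpose_eq_one hk,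
    appE_eq_toEuclideanCLM, appE_eq_toEuclideanCLM,
    ContinuousLinearMap.inner_map_map_of_mem_unitary (toEuclideanCLM_mem_unitary hk)]

lemma norm_appE_transpose_of_mul_transpose_eq_one (hk : k * kᵀ = 1)
    (v : EuclideanSpace ℝ (Fin d)) : ‖appE kᵀ v‖ = ‖v‖ :=
  norm_appE_of_mul_transpose_eq_one (by rw [transpose_transpose, mul_eq_one_comm, hk]) v

end Orthogonal

lemma norm_appE_diagonal_le {β : Fin d → ℝ} {c : ℝ} (hc : 0 ≤ c)
    (hβ : ∀ i, |β i| ≤ c) (v : EuclideanSpace ℝ (Fin d)) : ‖appE (diagonal β) v‖ ≤ c * ‖v‖ := by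
  rw [EuclideanSpace.norm_eq, EuclideanSpace.norm_eq, ← Real.sqrt_sq hc,
    ← Real.sqrt_mul (sq_nonneg c), Finset.mul_sum]
  refine Real.sqrt_le_sqrt (Finset.sum_le_sum fun i _ => ?_)
  simp only [appE_eq_toEuclideanCLM, ofLp_toEuclideanCLM, mulVec_diagonal, Real.norm_eq_abs,
    abs_mul, mul_pow]
  gcongr
  exact hβ i

lemma appE_diagonal_single (α : Fin d → ℝ) (i : Fin d) (c : ℝ) :
    appE (diagonal α) (EuclideanSpace.single i c) = α i • EuclideanSpace.single i c := by
  ext j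
  by_cases h : j = i
  · subst h; simp [appE_eq_toEuclideanCLM, mulVec_diagonal]
  · simp [appE_eq_toEuclideanCLM, mulVec_diagonal, h]

lemma norm_e1 (h : 0 < d) : ‖e1 h‖ = 1 := by
  simp [e1]

namespace IsSVD

variable {g k k' : Matrix (Fin d) (Fin d) ℝ} {α : Fin d → ℝ}

lemma pos (hg : IsSVD g k α k') (i : Fin d) : 0 < α i :=
  hg.2.2.1 i

lemma appE_transpose_e1 (hg : IsSVD g k α k') (h : 0 < d) :
    appE g (appE k'ᵀ (e1 h)) = α ⟨0, h⟩ • appE k (e1 h) := by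
  obtain ⟨-, hk', -, -, rfl⟩ := hg
  rw [appE_mul, appE_mul, ← appE_mul k', hk', appE_one, e1, appE_diagonal_single, appE_smul]

lemma norm_appE_le (hg : IsSVD g k α k') (h : 0 < d) (v : EuclideanSpace ℝ (Fin d)) :
    ‖appE g v‖ ≤ α ⟨0, h⟩ * ‖v‖ := by
  obtain ⟨hk, hk', hpos, hanti, rfl⟩ := hg
  rw [appE_mul, appE_mul, norm_appE_of_mul_transpose_eq_one hk,
    ← norm_appE_of_mul_transpose_eq_one hk' v]
  refine norm_appE_diagonal_le (hpos _).le (fun i => ?_) _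
  rw [abs_of_pos (hpos i)]
  exact hanti (Nat.zero_le _)

lemma opNorm_eq (hg : IsSVD g k α k') (h : 0 < d) : opNorm g = α ⟨0, h⟩ := by
  refine le_antisymm
    (ContinuousLinearMap.opNorm_le_bound _ (hg.pos _).le (hg.norm_appE_le h)) ?_
  have := _root_.norm_appE_le g (appE k'ᵀ (e1 h))
  rwa [hg.appE_transpose_e1 h, norm_smul, norm_appE_of_mul_transpose_eq_one hg.1,
    norm_appE_transpose_of_mul_transpose_eq_one hg.2.1, norm_e1, mul_one, mul_one,
    Real.norm_eq_abs, abs_of_pos (hg.pos _)] at this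

lemma sin_angle_mul_norm_le (hg : IsSVD g k α k') (h : 1 < d) (v : EuclideanSpace ℝ (Fin d)) :
    sinAngle (appE k (e1 (by omega))) (appE g v) * ‖appE g v‖ ≤ α ⟨1, h⟩ * ‖v‖ := by
  obtain ⟨hk, hk', hpos, hanti, rfl⟩ := hg
  set i0 : Fin d := ⟨0, by omega⟩
  set y := appE k' v
  have htail : appE (diagonal α) y - (α i0 * y i0) • e1 (by omega) =
      appE (diagonal (Function.update α i0 0)) y := by
    ext j
    by_cases hj : j = i0
    · subst hj; simp [appE_eq_toEuclideanCLM, mulVec_diagonal, e1, i0]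
    · simp [appE_eq_toEuclideanCLM, mulVec_diagonal, e1, i0, hj]
  rw [appE_mul, appE_mul, sinAngle, angle_appE_of_mul_transpose_eq_one hk,
    norm_appE_of_mul_transpose_eq_one hk, ← norm_appE_of_mul_transpose_eq_one hk' v]
  calc _ ≤ ‖appE (diagonal α) y - (α i0 * y i0) • e1 (by omega)‖ :=
        sin_angle_mul_norm_le_norm_sub_smul (norm_e1 _) _ _
    _ ≤ α ⟨1, h⟩ * ‖y‖ := by
      rw [htail]
      refine norm_appE_diagonal_le (hpos _).le (fun i => ?_) _
      by_cases hi : i = i0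
      · simpa [hi] using (hpos _).le
      · rw [Function.update_of_ne hi, abs_of_pos (hpos i)]
        exact hanti (Nat.one_le_iff_ne_zero.2 fun hi0 => hi (Fin.ext hi0))

end IsSVD

/-- Uniformly over `m` in a compact part of `GL(d,ℝ)`, the attracting line `Ξ(g·m)` of an
SVD of `g·m` is at sine-distance at most `C · (α 1)/(α 0)` from the attracting line `Ξ(g)`. -/
theorem stmt4 (d : ℕ) (hd : 2 ≤ d) (r : ℝ) (hr : 1 ≤ r) :
    ∃ C : ℝ, 0 < C ∧
      ∀ g m : Matrix (Fin d) (Fin d) ℝ, IsUnit g.det → IsUnit m.det →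
        opNorm m ≤ r → opNorm m⁻¹ ≤ r →
        ∀ (k : Matrix (Fin d) (Fin d) ℝ) (α : Fin d → ℝ)
          (k' : Matrix (Fin d) (Fin d) ℝ), IsSVD g k α k' →
        ∀ (κ : Matrix (Fin d) (Fin d) ℝ) (β : Fin d → ℝ)
          (κ'' : Matrix (Fin d) (Fin d) ℝ), IsSVD (g * m) κ β κ'' →
          sinAngle (appE k (e1 (by omega))) (appE κ (e1 (by omega)))
            ≤ C * (α ⟨1, by omega⟩ / α ⟨0, by omega⟩) := by
  refine ⟨r ^ 2, by positivity, fun g m _ hm hmr hm'r k α k' hg κ β κ'' hgm => ?_⟩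
  have h0 : 0 < d := by omega
  set e := e1 h0
  have hβ0 : 0 < β ⟨0, h0⟩ := hgm.pos _
  have hα0 : α ⟨0, h0⟩ ≤ β ⟨0, h0⟩ * r := calc
    α ⟨0, h0⟩ = opNorm (g * m * m⁻¹) := by
      rw [mul_nonsing_inv_cancel_right _ _ hm, hg.opNorm_eq h0]
    _ ≤ opNorm (g * m) * opNorm m⁻¹ := opNorm_mul_le _ _
    _ ≤ β ⟨0, h0⟩ * r := by rw [hgm.opNorm_eq h0]; gcongr
  have hsin : sinAngle (appE k e) (appE κ e) * β ⟨0, h0⟩ ≤ α ⟨1, by omega⟩ * r := by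
    have := hg.sin_angle_mul_norm_le (by omega) (appE m (appE κ''ᵀ e))
    rw [← appE_mul, hgm.appE_transpose_e1 h0, sinAngle, angle_smul_right_of_pos _ _ hβ0,
      norm_smul, norm_appE_of_mul_transpose_eq_one hgm.1, norm_e1, Real.norm_eq_abs,
      abs_of_pos hβ0, mul_one] at this
    refine this.trans (mul_le_mul_of_nonneg_left ?_ (hg.pos _).le)
    calc _ ≤ opNorm m * ‖appE κ''ᵀ e‖ := norm_appE_le _ _
      _ ≤ r := by
        rwa [norm_appE_transpose_of_mul_transpose_eq_one hgm.2.1, norm_e1, mul_one]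
  have hs : 0 ≤ sinAngle (appE k e) (appE κ e) := sin_angle_nonneg _ _
  rw [mul_div_assoc', le_div_iff₀ (hg.pos _)]
  nlinarith [mul_le_mul_of_nonneg_left hα0 hs,
    mul_le_mul_of_nonneg_right hsin (by linarith : 0 ≤ r)]
end

section
/- Let D ≥ 1 be an integer and κ, κ' > 0. For each i ∈ Fin D let (x_n^{(i)})_{n∈ℕ} and (y_n^{(i)})_{n∈ℕ} be sequences of real numbers. Assume: (a) for each i, the sequence (x_n^{(i)})_n is (κ,κ')-lower CLI; (b) for each n ∈ ℕ there is a permutation σ_n of Fin D such that y_n^{(i)} = x_n^{(σ_n(i))} for all i; (c) for every n, the D-tuple (y_n^{(i)})_i is nonincreasing in i, i.e. y_n^{(i)} ≥ y_n^{(j)} whenever i ≤ j. Then for each i, the sequence (y_n^{(i)})_n is (κ,κ')-lower CLI. -/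
/-- A real sequence `x` is `(κ,κ')`-lower CLI if `x (n+m) − x n ≥ κ·m − κ'` for all `n, m`. -/
def IsLowerCLI (κ κ' : ℝ) (x : ℕ → ℝ) : Prop :=
  ∀ n m : ℕ, κ * m - κ' ≤ x (n + m) - x n

/-- If the sequences `x^{(i)}` are all `(κ,κ')`-lower CLI and, for each `n`, the tuple
`(y_n^{(i)})_i` is a nonincreasing rearrangement of `(x_n^{(i)})_i`, then each `y^{(i)}`
is `(κ,κ')`-lower CLI. -/
theorem stmt8 (D : ℕ) (hD : 1 ≤ D) (κ κ' : ℝ) (hκ : 0 < κ) (hκ' : 0 < κ')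
    (x y : Fin D → ℕ → ℝ)
    (hx : ∀ i, IsLowerCLI κ κ' (x i))
    (hperm : ∀ n : ℕ, ∃ σ : Equiv.Perm (Fin D), ∀ i, y i n = x (σ i) n)
    (hmono : ∀ n : ℕ, ∀ i j : Fin D, i ≤ j → y j n ≤ y i n) :
    ∀ i, IsLowerCLI κ κ' (y i) := by
  intro i n m
  obtain ⟨σ, hσ⟩ := hperm n
  obtain ⟨τ, hτ⟩ := hperm (n + m)
  set c : ℝ := y i n + (κ * m - κ') with hc
  -- the set of positions at time n+m whose value is at least c
  set B : Finset (Fin D) := Finset.univ.filter (fun k => c ≤ y k (n + m)) with hB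
  have hmap : ∀ k : Fin D, k ≤ i → τ.symm (σ k) ∈ B := by
    intro k hk
    have h1 : κ * m - κ' ≤ x (σ k) (n + m) - x (σ k) n := hx (σ k) n m
    have h2 : y i n ≤ y k n := hmono n k i hk
    have h3 : y (τ.symm (σ k)) (n + m) = x (σ k) (n + m) := by
      rw [hτ (τ.symm (σ k)), Equiv.apply_symm_apply]
    have h4 : y k n = x (σ k) n := hσ k
    simp only [hB, Finset.mem_filter, Finset.mem_univ, true_and]
    rw [h3, hc]
    nlinarith
  have hcard : (i : ℕ) + 1 ≤ B.card := by
    have : (Finset.Iic i).card ≤ B.card := by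
      apply Finset.card_le_card_of_injOn (fun k => τ.symm (σ k))
      · intro k hk
        exact hmap k (Finset.mem_Iic.mp hk)
      · intro a _ b _ hab
        exact σ.injective (τ.symm.injective hab)
    simpa [Fin.card_Iic] using this
  have hex : ∃ k ∈ B, i ≤ k := by
    by_contra h
    push_neg at h
    have hsub : B ⊆ Finset.Iio i := by
      intro k hk
      exact Finset.mem_Iio.mpr (h k hk)
    have := Finset.card_le_card hsub
    rw [Fin.card_Iio] at this
    omega
  obtain ⟨k, hkB, hik⟩ := hex
  have : c ≤ y k (n + m) := by
    simpa [hB] using hkB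
  have h5 : y k (n + m) ≤ y i (n + m) := hmono (n + m) i k hik
  rw [hc] at this
  linarith
end

section
/- Let D ≥ 1 be an integer and κ, κ' > 0. For each i ∈ Fin D let (x_n^{(i)})_{n∈ℕ} and (y_n^{(i)})_{n∈ℕ} be sequences of real numbers. Assume: (a) for each i, the sequence (x_n^{(i)})_n is (κ,κ')-lower CLI; (b) for each n ∈ ℕ there is a permutation σ_n of Fin D such that y_n^{(i)} = x_n^{(σ_n(i))} for all i; (c) there exists M > 0 such that |y_{n+1}^{(i)} − y_n^{(i)}| ≤ M for all n ∈ ℕ and all i ∈ Fin D. Then for each i, the sequence (y_n^{(i)})_n is (κ, κ' + D·(κ + κ' + M))-lower CLI. -/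
/-- If the sequences `x^{(i)}` are all `(κ,κ')`-lower CLI, each tuple `(y_n^{(i)})_i` is a
rearrangement of `(x_n^{(i)})_i`, and the `y^{(i)}` have steps bounded by `M`, then each
`y^{(i)}` is `(κ, κ' + D(κ + κ' + M))`-lower CLI. -/
theorem stmt9 (D : ℕ) (hD : 1 ≤ D) (κ κ' : ℝ) (hκ : 0 < κ) (hκ' : 0 < κ')
    (x y : Fin D → ℕ → ℝ)
    (hx : ∀ i, IsLowerCLI κ κ' (x i))
    (hperm : ∀ n : ℕ, ∃ σ : Equiv.Perm (Fin D), ∀ i, y i n = x (σ i) n)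
    (M : ℝ) (hM : 0 < M)
    (hstep : ∀ (n : ℕ) (i : Fin D), |y i (n + 1) - y i n| ≤ M) :
    ∀ i, IsLowerCLI κ (κ' + D * (κ + κ' + M)) (y i) := by
  intro i n m
  set C : ℝ := κ + κ' + M with hC
  have hC0 : 0 < C := by positivity
  choose σ hσ using hperm
  set j : ℕ → Fin D := fun t => σ (n + t) i with hjdef
  have hy : ∀ t, y i (n + t) = x (j t) (n + t) := fun t => hσ (n + t) i
  -- consecutive step along the track
  have hstep' : ∀ t : ℕ, x (j t) (n + t) - M ≤ x (j (t + 1)) (n + (t + 1)) := by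
    intro t
    have h := (abs_le.1 (hstep (n + t) i)).1
    have e1 := hy t
    have e2 := hy (t + 1)
    have : n + t + 1 = n + (t + 1) := by ring
    rw [this] at h
    rw [e1, e2] at h
    linarith
  -- anchor bound: from an anchor at time s ≤ t, get a bound at time t (costing κ')
  have anchor : ∀ (a : Fin D) (s t : ℕ), s ≤ t →
      ∀ B : ℝ, B ≤ x a (n + s) → B + κ * t - κ * s - κ' ≤ x a (n + t) := by
    intro a s t hst B hB
    have h := hx a (n + s) (t - s)
    have hts : n + s + (t - s) = n + t := by omega
    rw [hts] at h
    have hcast : ((t - s : ℕ) : ℝ) = (t : ℝ) - (s : ℝ) := by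
      rw [Nat.cast_sub hst]
    rw [hcast] at h
    nlinarith
  -- main invariant
  have key : ∀ t : ℕ, ∃ V : Finset (Fin D), (∀ s ≤ t, j s ∈ V) ∧
      ∀ a ∈ V, ∃ s ≤ t,
        x (j 0) n + κ * s - ((V.card : ℝ) - 1) * C ≤ x a (n + s) := by
    intro t
    induction t with
    | zero =>
      refine ⟨{j 0}, ?_, ?_⟩
      · intro s hs
        interval_cases s
        simp
      · intro a ha
        simp only [Finset.mem_singleton] at ha
        subst ha
        refine ⟨0, le_refl 0, ?_⟩
        simp
    | succ t ih =>
      obtain ⟨V, hV1, hV2⟩ := ih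
      by_cases hmem : j (t + 1) ∈ V
      · refine ⟨V, ?_, ?_⟩
        · intro s hs
          rcases Nat.le_succ_iff.mp hs with hs' | hs'
          · exact hV1 s hs'
          · rw [hs']; exact hmem
        · intro a ha
          obtain ⟨s, hs, h⟩ := hV2 a ha
          exact ⟨s, hs.trans (Nat.le_succ t), h⟩
      · refine ⟨insert (j (t + 1)) V, ?_, ?_⟩
        · intro s hs
          rcases Nat.le_succ_iff.mp hs with hs' | hs'
          · exact Finset.mem_insert_of_mem (hV1 s hs')
          · rw [hs']; exact Finset.mem_insert_self _ _
        · have hcard : (insert (j (t + 1)) V).card = V.card + 1 :=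
            Finset.card_insert_of_notMem hmem
          intro a ha
          rcases Finset.mem_insert.mp ha with ha' | ha'
          · -- new element: anchor at time t+1
            subst ha'
            obtain ⟨s, hs, hA⟩ := hV2 (j t) (hV1 t le_rfl)
            have h1 := anchor (j t) s t hs _ hA
            have h2 := hstep' t
            refine ⟨t + 1, le_refl _, ?_⟩
            rw [hcard]
            push_cast
            push_cast at h1
            nlinarith
          · obtain ⟨s, hs, h⟩ := hV2 a ha'
            refine ⟨s, hs.trans (Nat.le_succ t), ?_⟩
            rw [hcard]
            push_cast
            nlinarith
  -- conclude
  obtain ⟨V, hV1, hV2⟩ := key m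
  obtain ⟨s, hs, hA⟩ := hV2 (j m) (hV1 m le_rfl)
  have h1 := anchor (j m) s m hs _ hA
  have hcardD : (V.card : ℝ) ≤ (D : ℝ) := by
    have := Finset.card_le_univ V
    simp only [Finset.card_univ, Fintype.card_fin] at this
    exact_mod_cast this
  have hy0 : y i n = x (j 0) n := by
    have := hy 0
    simpa using this
  have hym : y i (n + m) = x (j m) (n + m) := hy m
  rw [hy0, hym]
  nlinarith
end

section
/- Let E be a finite-dimensional real inner product space and let f, g : E → E be linear isomorphisms. Assume that the image of the closed unit ball of E under f is contained in its image under g (i.e. the ellipsoid f(B) is contained in the ellipsoid g(B)). Then for every natural number k with 1 ≤ k ≤ dim E: the supremum, over all k-dimensional linear subspaces V of E, of the infimum of ‖f(x)‖ over unit vectors x ∈ V, is at most the supremum, over all k-dimensional linear subspaces W of E, of the infimum of ‖g(x)‖ over unit vectors x ∈ W. -/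
open Module Metric

/-- Ellipsoid lemma: if the image of the closed unit ball under the linear isomorphism `f`
is contained in its image under `g`, then for each `1 ≤ k ≤ dim E` the `k`-th largest
singular value of `f` (in its Courant–Fischer sup-inf form) is at most that of `g`. -/
theorem stmt10 (E : Type*) [NormedAddCommGroup E] [InnerProductSpace ℝ E]
    [FiniteDimensional ℝ E] (f g : E ≃ₗ[ℝ] E)
    (h : ⇑f '' Metric.closedBall 0 1 ⊆ ⇑g '' Metric.closedBall 0 1)
    (k : ℕ) (hk1 : 1 ≤ k) (hk2 : k ≤ Module.finrank ℝ E) :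
    (⨆ V : {V : Submodule ℝ E // Module.finrank ℝ V = k},
        ⨅ x : {x : E // x ∈ V.1 ∧ ‖x‖ = 1}, ‖f x.1‖)
      ≤ ⨆ W : {W : Submodule ℝ E // Module.finrank ℝ W = k},
          ⨅ x : {x : E // x ∈ W.1 ∧ ‖x‖ = 1}, ‖g x.1‖ := by
  classical
  have key : ∀ x : E, ‖g.symm (f x)‖ ≤ ‖x‖ := by
    intro x
    rcases eq_or_ne x 0 with rfl | hx
    · simp
    · have hxn : (0:ℝ) < ‖x‖ := norm_pos_iff.2 hx
      have hu : (‖x‖⁻¹ • x) ∈ Metric.closedBall (0:E) 1 := by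
        simp [norm_smul, inv_mul_cancel₀ hxn.ne']
      obtain ⟨y, hy, hyx⟩ := h ⟨_, hu, rfl⟩
      have heq : g.symm (f (‖x‖⁻¹ • x)) = y := by
        rw [← hyx]; exact g.symm_apply_apply y
      have h1 : ‖g.symm (f (‖x‖⁻¹ • x))‖ ≤ 1 := by
        rw [heq]; simpa using hy
      have h2 : g.symm (f (‖x‖⁻¹ • x)) = ‖x‖⁻¹ • g.symm (f x) := by
        simp [map_smul]
      rw [h2, norm_smul, norm_inv, norm_norm] at h1
      calc ‖g.symm (f x)‖ = ‖x‖ * (‖x‖⁻¹ * ‖g.symm (f x)‖) := by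
            field_simp
        _ ≤ ‖x‖ * 1 := mul_le_mul_of_nonneg_left h1 hxn.le
        _ = ‖x‖ := mul_one _
  obtain ⟨b, hb⟩ := exists_linearIndependent_of_le_finrank (R := ℝ) (n := k) hk2
  have hVex : Nonempty {V : Submodule ℝ E // Module.finrank ℝ V = k} :=
    ⟨⟨Submodule.span ℝ (Set.range b), by
      rw [finrank_span_eq_card hb, Fintype.card_fin]⟩⟩
  have unit_mem : ∀ (V : Submodule ℝ E), Module.finrank ℝ V = k →
      ∃ x : E, x ∈ V ∧ ‖x‖ = 1 := by
    intro V hV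
    have hVne : V ≠ ⊥ := by
      intro hbot
      rw [hbot, finrank_bot] at hV
      omega
    obtain ⟨v, hv, hv0⟩ := Submodule.exists_mem_ne_zero_of_ne_bot hVne
    have hvn : (0:ℝ) < ‖v‖ := norm_pos_iff.2 hv0
    exact ⟨‖v‖⁻¹ • v, V.smul_mem _ hv, by
      simp [norm_smul, inv_mul_cancel₀ hvn.ne']⟩
  set gc : E →L[ℝ] E := LinearMap.toContinuousLinearMap g.toLinearMap with hgc
  have hbdd : BddAbove (Set.range fun W : {W : Submodule ℝ E // Module.finrank ℝ W = k} =>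
      ⨅ x : {x : E // x ∈ W.1 ∧ ‖x‖ = 1}, ‖g x.1‖) := by
    refine ⟨‖gc‖, ?_⟩
    rintro r ⟨W, rfl⟩
    obtain ⟨x, hxW, hx1⟩ := unit_mem W.1 W.2
    have hbb : BddBelow (Set.range fun x : {x : E // x ∈ W.1 ∧ ‖x‖ = 1} => ‖g x.1‖) := by
      refine ⟨0, ?_⟩; rintro r ⟨y, rfl⟩; exact norm_nonneg _
    refine ciInf_le_of_le hbb (⟨x, hxW, hx1⟩ : {x : E // x ∈ W.1 ∧ ‖x‖ = 1}) ?_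
    calc ‖g x‖ = ‖gc x‖ := rfl
      _ ≤ ‖gc‖ * ‖x‖ := gc.le_opNorm x
      _ = ‖gc‖ := by rw [hx1, mul_one]
  refine ciSup_le fun V => ?_
  set e : E ≃ₗ[ℝ] E := f.trans g.symm with he
  set W : Submodule ℝ E := V.1.map (e : E →ₗ[ℝ] E) with hW
  have hWk : Module.finrank ℝ W = k := by
    rw [hW, LinearEquiv.finrank_map_eq]; exact V.2
  refine le_trans ?_ (le_ciSup hbdd ⟨W, hWk⟩)
  obtain ⟨x₀, hx₀W, hx₀1⟩ := unit_mem W hWk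
  have hne : Nonempty {x : E // x ∈ W ∧ ‖x‖ = 1} := ⟨⟨x₀, hx₀W, hx₀1⟩⟩
  refine le_ciInf fun w => ?_
  obtain ⟨hwW, hw1⟩ := w.2
  obtain ⟨v, hvV, hve⟩ := hwW
  have hve' : g.symm (f v) = w.1 := hve
  have hv0 : v ≠ 0 := by
    intro h0; apply one_ne_zero (α := ℝ)
    rw [← hw1, ← hve', h0]; simp
  have hvn : (0:ℝ) < ‖v‖ := norm_pos_iff.2 hv0
  have hvge1 : (1:ℝ) ≤ ‖v‖ := by
    have := key v
    rw [hve', hw1] at this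
    exact this
  have hgw : g w.1 = f v := by
    rw [← hve']; exact g.apply_symm_apply _
  set v' : E := ‖v‖⁻¹ • v with hv'
  have hv'V : v' ∈ V.1 := V.1.smul_mem _ hvV
  have hv'1 : ‖v'‖ = 1 := by
    simp [hv', norm_smul, inv_mul_cancel₀ hvn.ne']
  have hbb : BddBelow (Set.range fun x : {x : E // x ∈ V.1 ∧ ‖x‖ = 1} => ‖f x.1‖) := by
    refine ⟨0, ?_⟩; rintro r ⟨y, rfl⟩; exact norm_nonneg _
  refine ciInf_le_of_le hbb (⟨v', hv'V, hv'1⟩ : {x : E // x ∈ V.1 ∧ ‖x‖ = 1}) ?_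
  have hfv' : ‖f v'‖ = ‖v‖⁻¹ * ‖f v‖ := by
    simp [hv', map_smul, norm_smul]
  rw [hfv', hgw]
  calc ‖v‖⁻¹ * ‖f v‖ ≤ 1 * ‖f v‖ :=
        mul_le_mul_of_nonneg_right (by
          rw [inv_le_one_iff₀]; right; exact hvge1) (norm_nonneg _)
    _ = ‖f v‖ := one_mul _
end

section
/- Let d ≥ 2 and let g : ℕ → GL(d,ℝ) have bounded steps. For each n ∈ ℕ fix a singular value decomposition g(n) = k(n)·diag(α(n))·k'(n). Then there exists r ≥ 0 such that for all n ∈ ℕ and all indices i, j ∈ Fin d, the (i,j) entry of the orthogonal matrix k(n)⁻¹·k(n+1) satisfies |(k(n)⁻¹·k(n+1))_{ij}| ≤ e^r · min( α(n) i / α(n) j , α(n) j / α(n) i ). -/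
open Matrix

/-- A sequence of matrices has bounded steps if consecutive quotients are uniformly
bounded (in operator norm) together with their inverses. -/
noncomputable def HasBoundedSteps {d : ℕ} (g : ℕ → Matrix (Fin d) (Fin d) ℝ) : Prop :=
  ∃ r₀ : ℝ, 1 ≤ r₀ ∧ ∀ n : ℕ,
    opNorm ((g n)⁻¹ * g (n + 1)) ≤ r₀ ∧ opNorm ((g (n + 1))⁻¹ * g n) ≤ r₀

open scoped Matrix.Norms.L2Operator

namespace Stmt11Aux

variable {d : ℕ}

lemma opNorm_eq_norm (M : Matrix (Fin d) (Fin d) ℝ) : opNorm M = ‖M‖ := rfl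

lemma abs_entry_le_norm (M : Matrix (Fin d) (Fin d) ℝ) (i j : Fin d) : |M i j| ≤ ‖M‖ := by
  have h := M.l2_opNorm_mulVec (EuclideanSpace.single j (1:ℝ))
  rw [EuclideanSpace.norm_single, norm_one, mul_one] at h
  refine le_trans ?_ h
  set y : EuclideanSpace ℝ (Fin d) :=
    (EuclideanSpace.equiv (Fin d) ℝ).symm (M *ᵥ (EuclideanSpace.single j (1:ℝ))) with hy
  have hyi : y i = M i j := by
    show (M *ᵥ (Pi.single j (1:ℝ))) i = M i j
    simp [Matrix.mulVec_single]
  rw [← hyi, EuclideanSpace.norm_eq]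
  have h1 : |y i| = Real.sqrt (‖y i‖^2) := by
    rw [Real.sqrt_sq (norm_nonneg _), Real.norm_eq_abs]
  rw [h1]
  exact Real.sqrt_le_sqrt (Finset.single_le_sum (fun c _ => sq_nonneg ‖y c‖) (Finset.mem_univ i))

lemma norm_of_orth (hd : 0 < d) {K : Matrix (Fin d) (Fin d) ℝ} (h : K * Kᵀ = 1) : ‖K‖ = 1 := by
  haveI : Nontrivial (Matrix (Fin d) (Fin d) ℝ) :=
    ⟨1, 0, fun h => by
      have := congrFun (congrFun h ⟨0, hd⟩) ⟨0, hd⟩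
      simp [Matrix.one_apply] at this⟩
  have hU : K ∈ unitary (Matrix (Fin d) (Fin d) ℝ) := by
    constructor
    · rw [Matrix.star_eq_conjTranspose, Matrix.conjTranspose_eq_transpose_of_trivial]
      exact mul_eq_one_comm.mp h
    · rw [Matrix.star_eq_conjTranspose, Matrix.conjTranspose_eq_transpose_of_trivial]
      exact h
  exact CStarRing.norm_of_mem_unitary hU

lemma norm_conj (hd : 0 < d) {u v : Matrix (Fin d) (Fin d) ℝ} (hu : u * uᵀ = 1)
    (hv : v * vᵀ = 1) (h : Matrix (Fin d) (Fin d) ℝ) : ‖u * h * vᵀ‖ ≤ ‖h‖ := by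
  have h1 : ‖u‖ = 1 := norm_of_orth hd hu
  have hvt : vᵀ * (vᵀ)ᵀ = 1 := by
    rw [Matrix.transpose_transpose]; exact mul_eq_one_comm.mp hv
  have h2 : ‖vᵀ‖ = 1 := norm_of_orth hd hvt
  calc ‖u * h * vᵀ‖ ≤ ‖u * h‖ * ‖vᵀ‖ := Matrix.l2_opNorm_mul _ _
    _ ≤ ‖u‖ * ‖h‖ * ‖vᵀ‖ :=
        mul_le_mul_of_nonneg_right (Matrix.l2_opNorm_mul _ _) (norm_nonneg _)
    _ = ‖h‖ := by rw [h1, h2, one_mul, mul_one]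

lemma exists_big_entry {K : Matrix (Fin d) (Fin d) ℝ} (h1 : K * Kᵀ = 1) (h2 : Kᵀ * K = 1)
    (j : Fin d) : ∃ i c : Fin d, j ≤ i ∧ c ≤ j ∧ (1:ℝ)/d ≤ |K i c| := by
  have hd0 : 0 < d := j.pos
  have col : ∀ c, ∑ i, K i c ^ 2 = 1 := fun c => by
    have := congrFun (congrFun h2 c) c
    simpa [Matrix.mul_apply, Matrix.one_apply, sq] using this
  have row : ∀ i, ∑ c, K i c ^ 2 = 1 := fun i => by
    have := congrFun (congrFun h1 i) i
    simpa [Matrix.mul_apply, Matrix.one_apply, sq] using this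
  set S : Finset (Fin d) := Finset.Ici j with hS
  set T : Finset (Fin d) := Finset.Iic j with hT
  have hcard : (T.card : ℝ) = (Sᶜ.card : ℝ) + 1 := by
    have hc : Sᶜ = Finset.Iio j := by
      ext x; simp [hS, Finset.mem_compl, not_le]
    rw [hc, hT, Fin.card_Iic, Fin.card_Iio]
    push_cast; ring
  have key : (1:ℝ) ≤ ∑ c ∈ T, ∑ i ∈ S, K i c ^ 2 := by
    have htot : ∑ c ∈ T, ∑ i, K i c ^ 2 = (T.card : ℝ) := by
      rw [Finset.sum_congr rfl (fun c _ => col c)]; simp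
    have hsplit : ∑ c ∈ T, ∑ i, K i c ^ 2
        = ∑ c ∈ T, ∑ i ∈ S, K i c ^ 2 + ∑ c ∈ T, ∑ i ∈ Sᶜ, K i c ^ 2 := by
      rw [← Finset.sum_add_distrib]
      exact Finset.sum_congr rfl (fun c _ => (Finset.sum_add_sum_compl S _).symm)
    have hb : ∑ c ∈ T, ∑ i ∈ Sᶜ, K i c ^ 2 ≤ (Sᶜ.card : ℝ) := by
      rw [Finset.sum_comm]
      calc ∑ i ∈ Sᶜ, ∑ c ∈ T, K i c ^ 2
          ≤ ∑ i ∈ Sᶜ, ∑ c, K i c ^ 2 :=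
            Finset.sum_le_sum (fun i _ => Finset.sum_le_univ_sum_of_nonneg (fun c => sq_nonneg _))
        _ = (Sᶜ.card : ℝ) := by rw [Finset.sum_congr rfl (fun i _ => row i)]; simp
    linarith [hsplit ▸ htot]
  by_contra hcon
  push_neg at hcon
  have hpt : ∀ p ∈ T ×ˢ S, K p.2 p.1 ^ 2 < ((1:ℝ)/d)^2 := by
    rintro ⟨c, i⟩ hp
    rw [Finset.mem_product] at hp
    have := hcon i c (Finset.mem_Ici.mp hp.2) (Finset.mem_Iic.mp hp.1)
    have h0 : (0:ℝ) < 1/d := by positivity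
    nlinarith [sq_abs (K i c), abs_nonneg (K i c)]
  have hne : (T ×ˢ S).Nonempty := ⟨⟨j, j⟩, by simp [hT, hS]⟩
  have hsum : ∑ p ∈ T ×ˢ S, K p.2 p.1 ^ 2 < (T ×ˢ S).card * ((1:ℝ)/d)^2 := by
    calc ∑ p ∈ T ×ˢ S, K p.2 p.1 ^ 2 < ∑ _p ∈ T ×ˢ S, ((1:ℝ)/d)^2 :=
          Finset.sum_lt_sum_of_nonempty hne hpt
      _ = (T ×ˢ S).card * ((1:ℝ)/d)^2 := by rw [Finset.sum_const, nsmul_eq_mul]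
  have hcard2 : ((T ×ˢ S).card : ℝ) ≤ (d:ℝ) * d := by
    rw [Finset.card_product]
    push_cast
    have h1 : T.card ≤ d := le_trans (Finset.card_le_univ T) (by simp)
    have h2 : S.card ≤ d := le_trans (Finset.card_le_univ S) (by simp)
    exact_mod_cast Nat.mul_le_mul h1 h2
  have heq : ∑ p ∈ T ×ˢ S, K p.2 p.1 ^ 2 = ∑ c ∈ T, ∑ i ∈ S, K i c ^ 2 := by
    rw [Finset.sum_product]
  have hdpos : (0:ℝ) < d := by exact_mod_cast hd0
  have : ((T ×ˢ S).card : ℝ) * ((1:ℝ)/d)^2 ≤ 1 := by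
    have hh : (d:ℝ) * d * ((1/d)^2) = 1 := by field_simp
    nlinarith [sq_nonneg ((1:ℝ)/d)]
  linarith [heq ▸ hsum]

lemma diag_inv_cancel {a : Fin d → ℝ} (ha : ∀ i, 0 < a i) :
    diagonal a * diagonal (fun i => (a i)⁻¹) = 1 := by
  rw [diagonal_mul_diagonal,
    show (fun i => a i * (a i)⁻¹) = fun _ => (1:ℝ) from funext fun i => mul_inv_cancel₀ (ha i).ne',
    diagonal_one]

lemma svd_right_inv {g k : Matrix (Fin d) (Fin d) ℝ} {a : Fin d → ℝ}
    {k' : Matrix (Fin d) (Fin d) ℝ} (h : IsSVD g k a k') :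
    g * (k'ᵀ * diagonal (fun i => (a i)⁻¹) * kᵀ) = 1 := by
  obtain ⟨hk, hk', ha, -, hg⟩ := h
  subst hg
  have c1 : ∀ X : Matrix (Fin d) (Fin d) ℝ, k' * (k'ᵀ * X) = X := fun X => by
    rw [← Matrix.mul_assoc, hk', Matrix.one_mul]
  have c2 : ∀ X : Matrix (Fin d) (Fin d) ℝ,
      diagonal a * (diagonal (fun i => (a i)⁻¹) * X) = X := fun X => by
    rw [← Matrix.mul_assoc, diag_inv_cancel ha, Matrix.one_mul]
  simp only [Matrix.mul_assoc]
  rw [c1, c2, hk]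

lemma svd_key {g1 g2 k1 k2 k1' k2' : Matrix (Fin d) (Fin d) ℝ} {a b : Fin d → ℝ}
    (h1 : IsSVD g1 k1 a k1') (h2 : IsSVD g2 k2 b k2') :
    (k1ᵀ * k2) * diagonal b = diagonal a * (k1' * (g1⁻¹ * g2) * k2'ᵀ) := by
  have hginv : g1⁻¹ = k1'ᵀ * diagonal (fun i => (a i)⁻¹) * k1ᵀ :=
    inv_eq_right_inv (svd_right_inv h1)
  obtain ⟨hk1, hk1', ha, -, hg1⟩ := h1
  obtain ⟨hk2, hk2', hb, -, hg2⟩ := h2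
  have c1 : ∀ X : Matrix (Fin d) (Fin d) ℝ, k1' * (k1'ᵀ * X) = X := fun X => by
    rw [← Matrix.mul_assoc, hk1', Matrix.one_mul]
  have c2 : ∀ X : Matrix (Fin d) (Fin d) ℝ,
      diagonal a * (diagonal (fun i => (a i)⁻¹) * X) = X := fun X => by
    rw [← Matrix.mul_assoc, diag_inv_cancel ha, Matrix.one_mul]
  rw [hginv, hg2]
  simp only [Matrix.mul_assoc]
  rw [c1, c2, hk2', Matrix.mul_one]

end Stmt11Aux

open Stmt11Aux

/-- For a bounded-step sequence `g(n) = k(n)·diag(α(n))·k'(n)` there is `r ≥ 0` with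
`|(k(n)⁻¹ k(n+1))_{ij}| ≤ e^r · min(α(n) i/α(n) j, α(n) j/α(n) i)` for all `n, i, j`. -/
theorem stmt11 (d : ℕ) (hd : 2 ≤ d) (g : ℕ → Matrix (Fin d) (Fin d) ℝ)
    (hbd : HasBoundedSteps g)
    (k : ℕ → Matrix (Fin d) (Fin d) ℝ) (α : ℕ → Fin d → ℝ)
    (k' : ℕ → Matrix (Fin d) (Fin d) ℝ)
    (hsvd : ∀ n : ℕ, IsSVD (g n) (k n) (α n) (k' n)) :
    ∃ r : ℝ, 0 ≤ r ∧ ∀ (n : ℕ) (i j : Fin d),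
      |((k n)⁻¹ * k (n + 1)) i j|
        ≤ Real.exp r * min (α n i / α n j) (α n j / α n i) := by
  obtain ⟨r₀, hr₀, hstep⟩ := hbd
  have hd0 : 0 < d := by omega
  have hdR : (0:ℝ) < d := by exact_mod_cast hd0
  have hd2 : (2:ℝ) ≤ d := by exact_mod_cast hd
  set E : ℝ := d * r₀^2 with hE
  have hE1 : 1 ≤ E := by nlinarith
  refine ⟨Real.log E, Real.log_nonneg hE1, ?_⟩
  have hexp : Real.exp (Real.log E) = E := Real.exp_log (by linarith)
  intro n i j
  rw [hexp]
  have h1 := hsvd n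
  have h2 := hsvd (n + 1)
  set a := α n with ha'
  set b := α (n + 1) with hb'
  have ha : ∀ p, 0 < a p := h1.2.2.1
  have hb : ∀ p, 0 < b p := h2.2.2.1
  have haA : Antitone a := h1.2.2.2.1
  have hbA : Antitone b := h2.2.2.2.1
  have hkinv : (k n)⁻¹ = (k n)ᵀ := inv_eq_right_inv h1.1
  rw [hkinv]
  set K := (k n)ᵀ * k (n + 1) with hK
  set Q := k' n * ((g n)⁻¹ * g (n + 1)) * (k' (n + 1))ᵀ with hQ
  set R := k' (n + 1) * ((g (n + 1))⁻¹ * g n) * (k' n)ᵀ with hR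
  have hQn : ‖Q‖ ≤ r₀ := by
    refine le_trans (norm_conj hd0 h1.2.1 h2.2.1 _) ?_
    rw [← opNorm_eq_norm]; exact (hstep n).1
  have hRn : ‖R‖ ≤ r₀ := by
    refine le_trans (norm_conj hd0 h2.2.1 h1.2.1 _) ?_
    rw [← opNorm_eq_norm]; exact (hstep n).2
  have hKey1 := svd_key h1 h2
  have E1 : ∀ p q, K p q * b q = a p * Q p q := fun p q => by
    have := congrFun (congrFun hKey1 p) q
    rwa [Matrix.mul_diagonal, Matrix.diagonal_mul] at this
  have hKey2 := svd_key h2 h1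
  have hKT : (k (n + 1))ᵀ * k n = Kᵀ := by
    rw [hK, Matrix.transpose_mul, Matrix.transpose_transpose]
  rw [hKT] at hKey2
  have E2 : ∀ p q, K q p * a q = b p * R p q := fun p q => by
    have := congrFun (congrFun hKey2 p) q
    rwa [Matrix.mul_diagonal, Matrix.diagonal_mul, Matrix.transpose_apply] at this
  have I1 : ∀ p q, |K p q| * b q ≤ r₀ * a p := fun p q => by
    have e : |K p q * b q| = |a p * Q p q| := by rw [E1 p q]
    rw [abs_mul, abs_mul, abs_of_pos (hb q), abs_of_pos (ha p)] at e
    have hq := le_trans (abs_entry_le_norm Q p q) hQn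
    calc |K p q| * b q = a p * |Q p q| := e
      _ ≤ a p * r₀ := mul_le_mul_of_nonneg_left hq (le_of_lt (ha p))
      _ = r₀ * a p := mul_comm _ _
  have I2 : ∀ p q, |K q p| * a q ≤ r₀ * b p := fun p q => by
    have e : |K q p * a q| = |b p * R p q| := by rw [E2 p q]
    rw [abs_mul, abs_mul, abs_of_pos (ha q), abs_of_pos (hb p)] at e
    have hq := le_trans (abs_entry_le_norm R p q) hRn
    calc |K q p| * a q = b p * |R p q| := e
      _ ≤ b p * r₀ := mul_le_mul_of_nonneg_left hq (le_of_lt (hb p))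
      _ = r₀ * b p := mul_comm _ _
  have hKo1 : K * Kᵀ = 1 := by
    rw [hK, Matrix.transpose_mul, Matrix.transpose_transpose]
    have c : ∀ X : Matrix (Fin d) (Fin d) ℝ, k (n + 1) * ((k (n + 1))ᵀ * X) = X := fun X => by
      rw [← Matrix.mul_assoc, h2.1, Matrix.one_mul]
    simp only [Matrix.mul_assoc]
    rw [c]
    exact mul_eq_one_comm.mp h1.1
  have hKo2 : Kᵀ * K = 1 := by
    rw [hK, Matrix.transpose_mul, Matrix.transpose_transpose]
    have c : ∀ X : Matrix (Fin d) (Fin d) ℝ, k n * ((k n)ᵀ * X) = X := fun X => by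
      rw [← Matrix.mul_assoc, h1.1, Matrix.one_mul]
    simp only [Matrix.mul_assoc]
    rw [c]
    exact mul_eq_one_comm.mp h2.1
  have hr₀0 : (0:ℝ) < r₀ := lt_of_lt_of_le one_pos hr₀
  have cmp1 : b j ≤ d * r₀ * a j := by
    obtain ⟨i₀, c₀, hji, hcj, hbig⟩ := exists_big_entry hKo1 hKo2 j
    have chain : (1/d : ℝ) * b j ≤ r₀ * a j := by
      calc (1/d : ℝ) * b j ≤ |K i₀ c₀| * b c₀ :=
            mul_le_mul hbig (hbA hcj) (le_of_lt (hb j)) (abs_nonneg _)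
        _ ≤ r₀ * a i₀ := I1 i₀ c₀
        _ ≤ r₀ * a j := mul_le_mul_of_nonneg_left (haA hji) hr₀0.le
    have h' := mul_le_mul_of_nonneg_left chain hdR.le
    calc b j = (d:ℝ) * ((1/d) * b j) := by field_simp
      _ ≤ (d:ℝ) * (r₀ * a j) := h'
      _ = d * r₀ * a j := by ring
  have cmp2 : a j ≤ d * r₀ * b j := by
    have hKo1' : Kᵀ * (Kᵀ)ᵀ = 1 := by rw [Matrix.transpose_transpose]; exact hKo2
    have hKo2' : (Kᵀ)ᵀ * Kᵀ = 1 := by rw [Matrix.transpose_transpose]; exact hKo1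
    obtain ⟨i₁, c₁, hji, hcj, hbig⟩ := exists_big_entry hKo1' hKo2' j
    rw [Matrix.transpose_apply] at hbig
    have chain : (1/d : ℝ) * a j ≤ r₀ * b j := by
      calc (1/d : ℝ) * a j ≤ |K c₁ i₁| * a c₁ :=
            mul_le_mul hbig (haA hcj) (le_of_lt (ha j)) (abs_nonneg _)
        _ ≤ r₀ * b i₁ := I2 i₁ c₁
        _ ≤ r₀ * b j := mul_le_mul_of_nonneg_left (hbA hji) hr₀0.le
    have h' := mul_le_mul_of_nonneg_left chain hdR.le
    calc a j = (d:ℝ) * ((1/d) * a j) := by field_simp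
      _ ≤ (d:ℝ) * (r₀ * b j) := h'
      _ = d * r₀ * b j := by ring
  rcases le_total i j with hij | hij
  · have haji : a j ≤ a i := haA hij
    have hmin : min (a i / a j) (a j / a i) = a j / a i := by
      apply min_eq_right
      rw [div_le_div_iff₀ (ha i) (ha j)]
      nlinarith [ha i, ha j]
    rw [hmin, ← mul_div_assoc, le_div_iff₀ (ha i)]
    calc |K i j| * a i ≤ r₀ * b j := I2 j i
      _ ≤ r₀ * (d * r₀ * a j) := mul_le_mul_of_nonneg_left cmp1 hr₀0.le
      _ = E * a j := by rw [hE]; ring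
  · have haij : a i ≤ a j := haA hij
    have hmin : min (a i / a j) (a j / a i) = a i / a j := by
      apply min_eq_left
      rw [div_le_div_iff₀ (ha j) (ha i)]
      nlinarith [ha i, ha j]
    rw [hmin, ← mul_div_assoc, le_div_iff₀ (ha j)]
    calc |K i j| * a j ≤ |K i j| * (d * r₀ * b j) :=
          mul_le_mul_of_nonneg_left cmp2 (abs_nonneg _)
      _ = (d * r₀) * (|K i j| * b j) := by ring
      _ ≤ (d * r₀) * (r₀ * a i) :=
          mul_le_mul_of_nonneg_left (I1 i j) (by positivity)
      _ = E * a i := by rw [hE]; ring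
end

section
/- Let (X, dist) be a metric space, κ > 0, and let U₋, U₊, V₋, V₊ be pairwise disjoint subsets of X. Let A, B : X → X be bijections such that: A maps X∖U₋ into U₊ and dist(A x, A y) ≤ e^{−κ}·dist(x,y) for all x, y ∈ X∖U₋; A⁻¹ maps X∖U₊ into U₋ and dist(A⁻¹ x, A⁻¹ y) ≤ e^{−κ}·dist(x,y) for all x, y ∈ X∖U₊; B maps X∖V₋ into V₊ and dist(B x, B y) ≤ dist(x,y) for all x, y ∈ X∖V₋; B⁻¹ maps X∖V₊ into V₋ and dist(B⁻¹ x, B⁻¹ y) ≤ dist(x,y) for all x, y ∈ X∖V₊. Let φ : F₂ → Sym(X) be the group homomorphism from the free group on two generators a, b to the group of bijections of X determined by φ(a) = A and φ(b) = B. Then for every γ ∈ F₂ and all x, y ∈ X ∖ (U₋ ∪ U₊ ∪ V₋ ∪ V₊): dist( φ(γ)(x), φ(γ)(y) ) ≤ e^{−κ·ℓ_a(γ)} · dist(x, y). -/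
/-!
Ping-pong: write `γ` as a reduced word and apply its letters from right to left. A point outside
all four sets is sent by a letter `p` into its target set `S p`; since the next letter `q` is not
`p⁻¹`, and the target sets are pairwise disjoint, the point then lies outside `S q⁻¹`, which is
exactly where `q` is Lipschitz with its constant. Hence the constants multiply along the word, and
only the letters `a^{±1}` contribute a factor `e^{−κ}`.
-/

/-- The number of letters equal to `a` or `a⁻¹` in the reduced word of an element of the
free group on the two generators `a = FreeGroup.of 0` and `b = FreeGroup.of 1`. -/
def lenA (γ : FreeGroup (Fin 2)) : ℕ :=
  (FreeGroup.toWord γ).countP fun p => decide (p.1 = 0)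

open Set Function

theorem List.prod_map_ite_eq_pow_countP {α M : Type*} [CommMonoid M] (P : α → Prop)
    [DecidablePred P] (r : M) (L : List α) :
    (L.map fun a => if P a then r else 1).prod = r ^ L.countP P := by
  simp [List.prod_map_ite, List.countP_eq_length_filter]

namespace FreeGroup

variable {α X : Type*} (g : α × Bool → Equiv.Perm X) (S : α × Bool → Set X)

theorem mapsTo_prod_compl_of_isReduced_cons (hS : Pairwise (Disjoint on S))
    (hg : ∀ p, MapsTo (g p) (S (p.1, !p.2))ᶜ (S p)) :
    ∀ {p : α × Bool} {L : List (α × Bool)}, IsReduced (p :: L) →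
      MapsTo (L.map g).prod (⋃ q, S q)ᶜ (S (p.1, !p.2))ᶜ
  | _, [], _ => fun _ hx => compl_subset_compl.mpr (subset_iUnion S _) hx
  | p, q :: L, hL => by
    rw [isReduced_cons_cons] at hL
    have hq : q ≠ (p.1, !p.2) := fun h => by simp [h] at hL
    rw [List.map_cons, List.prod_cons, Equiv.Perm.coe_mul]
    exact ((hg q).comp (mapsTo_prod_compl_of_isReduced_cons hS hg hL.2)).mono_right
      (hS hq).subset_compl_right

theorem lipschitzOnWith_prod_of_isReduced [PseudoEMetricSpace X] (c : α × Bool → NNReal)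
    (hS : Pairwise (Disjoint on S)) (hg : ∀ p, MapsTo (g p) (S (p.1, !p.2))ᶜ (S p))
    (hc : ∀ p, LipschitzOnWith (c p) (g p) (S (p.1, !p.2))ᶜ) :
    ∀ {L : List (α × Bool)}, IsReduced L →
      LipschitzOnWith (L.map c).prod (L.map g).prod (⋃ q, S q)ᶜ
  | [], _ => by simpa using LipschitzWith.id.lipschitzOnWith
  | p :: L, hL => by
    rw [List.map_cons, List.prod_cons, List.map_cons, List.prod_cons, Equiv.Perm.coe_mul]
    exact (hc p).comp (lipschitzOnWith_prod_of_isReduced c hS hg hc hL.of_cons)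
      (mapsTo_prod_compl_of_isReduced_cons g S hS hg hL)

theorem lipschitzOnWith_lift [DecidableEq α] [PseudoEMetricSpace X] (f : α → Equiv.Perm X)
    (c : α × Bool → NNReal) (hS : Pairwise (Disjoint on S))
    (hf : ∀ p, MapsTo (cond p.2 (f p.1) (f p.1)⁻¹ : Equiv.Perm X) (S (p.1, !p.2))ᶜ (S p))
    (hc : ∀ p, LipschitzOnWith (c p) (cond p.2 (f p.1) (f p.1)⁻¹ : Equiv.Perm X)
      (S (p.1, !p.2))ᶜ)
    (w : FreeGroup α) : LipschitzOnWith (w.toWord.map c).prod (lift f w) (⋃ q, S q)ᶜ := by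
  have := lipschitzOnWith_prod_of_isReduced _ S c hS hf hc (isReduced_toWord (x := w))
  rwa [← lift_mk, mk_toWord] at this

end FreeGroup

theorem stmt16_general (X : Type*) [MetricSpace X] (κ : ℝ)
    (Um Up Vm Vp : Set X)
    (hd1 : Disjoint Um Up) (hd2 : Disjoint Um Vm) (hd3 : Disjoint Um Vp)
    (hd4 : Disjoint Up Vm) (hd5 : Disjoint Up Vp) (hd6 : Disjoint Vm Vp)
    (A B : Equiv.Perm X)
    (hA1 : ∀ x ∉ Um, A x ∈ Up)
    (hA2 : ∀ x ∉ Um, ∀ y ∉ Um, dist (A x) (A y) ≤ Real.exp (-κ) * dist x y)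
    (hA3 : ∀ x ∉ Up, A⁻¹ x ∈ Um)
    (hA4 : ∀ x ∉ Up, ∀ y ∉ Up, dist (A⁻¹ x) (A⁻¹ y) ≤ Real.exp (-κ) * dist x y)
    (hB1 : ∀ x ∉ Vm, B x ∈ Vp)
    (hB2 : ∀ x ∉ Vm, ∀ y ∉ Vm, dist (B x) (B y) ≤ dist x y)
    (hB3 : ∀ x ∉ Vp, B⁻¹ x ∈ Vm)
    (hB4 : ∀ x ∉ Vp, ∀ y ∉ Vp, dist (B⁻¹ x) (B⁻¹ y) ≤ dist x y)
    (φ : FreeGroup (Fin 2) →* Equiv.Perm X)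
    (hφ : φ = FreeGroup.lift fun i : Fin 2 => if i = 0 then A else B) :
    ∀ γ : FreeGroup (Fin 2), ∀ x ∉ Um ∪ Up ∪ Vm ∪ Vp, ∀ y ∉ Um ∪ Up ∪ Vm ∪ Vp,
      dist (φ γ x) (φ γ y) ≤ Real.exp (-(κ * (lenA γ : ℝ))) * dist x y := by
  subst hφ
  intro γ x hx y hy
  set f : Fin 2 → Equiv.Perm X := fun i => if i = 0 then A else B
  let S : Fin 2 × Bool → Set X := fun p => if p.1 = 0 then cond p.2 Up Um else cond p.2 Vp Vm
  let c : Fin 2 × Bool → NNReal := fun p => if p.1 = 0 then (Real.exp (-κ)).toNNReal else 1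
  have hS : Pairwise (Disjoint on S) := by
    rintro ⟨i, _ | _⟩ ⟨j, _ | _⟩ hij <;> fin_cases i <;> fin_cases j <;>
      simp_all [S, onFun, disjoint_comm]
  have hcover : ⋃ q, S q ⊆ Um ∪ Up ∪ Vm ∪ Vp := by
    rintro z ⟨_, ⟨⟨i, _ | _⟩, rfl⟩, hz⟩ <;> fin_cases i <;> simp_all [S]
  have hf : ∀ p, MapsTo (cond p.2 (f p.1) (f p.1)⁻¹ : Equiv.Perm X) (S (p.1, !p.2))ᶜ (S p) := by
    rintro ⟨i, _ | _⟩ <;> fin_cases i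
    exacts [hA3, hB3, hA1, hB1]
  have hc : ∀ p, LipschitzOnWith (c p) (cond p.2 (f p.1) (f p.1)⁻¹ : Equiv.Perm X)
      (S (p.1, !p.2))ᶜ := by
    rintro ⟨i, _ | _⟩ <;> fin_cases i
    exacts [.of_dist_le' hA4, .mk_one hB4, .of_dist_le' hA2, .mk_one hB2]
  have hγ := (FreeGroup.lipschitzOnWith_lift S f c hS hf hc γ).dist_le_mul x
    (fun h => hx (hcover h)) y (fun h => hy (hcover h))
  rw [List.prod_map_ite_eq_pow_countP, NNReal.coe_pow, Real.coe_toNNReal _ (Real.exp_pos _).le,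
    ← Real.exp_nat_mul, mul_neg] at hγ
  rwa [lenA, mul_comm κ]

/-- Ping-pong contraction estimate: if `A` contracts by `e^{−κ}` outside `U₋` (and `A⁻¹`
outside `U₊`), and `B` is `1`-Lipschitz outside `V₋` (and `B⁻¹` outside `V₊`), with the four
sets pairwise disjoint, then the bijection `φ(γ)` associated to a reduced word `γ` of the
free group contracts by `e^{−κ·ℓ_a(γ)}` on the complement of the four sets. -/
theorem stmt16 (X : Type*) [MetricSpace X] (κ : ℝ) (hκ : 0 < κ)
    (Um Up Vm Vp : Set X)
    (hd1 : Disjoint Um Up) (hd2 : Disjoint Um Vm) (hd3 : Disjoint Um Vp)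
    (hd4 : Disjoint Up Vm) (hd5 : Disjoint Up Vp) (hd6 : Disjoint Vm Vp)
    (A B : Equiv.Perm X)
    (hA1 : ∀ x ∉ Um, A x ∈ Up)
    (hA2 : ∀ x ∉ Um, ∀ y ∉ Um, dist (A x) (A y) ≤ Real.exp (-κ) * dist x y)
    (hA3 : ∀ x ∉ Up, A⁻¹ x ∈ Um)
    (hA4 : ∀ x ∉ Up, ∀ y ∉ Up, dist (A⁻¹ x) (A⁻¹ y) ≤ Real.exp (-κ) * dist x y)
    (hB1 : ∀ x ∉ Vm, B x ∈ Vp)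
    (hB2 : ∀ x ∉ Vm, ∀ y ∉ Vm, dist (B x) (B y) ≤ dist x y)
    (hB3 : ∀ x ∉ Vp, B⁻¹ x ∈ Vm)
    (hB4 : ∀ x ∉ Vp, ∀ y ∉ Vp, dist (B⁻¹ x) (B⁻¹ y) ≤ dist x y)
    (φ : FreeGroup (Fin 2) →* Equiv.Perm X)
    (hφ : φ = FreeGroup.lift fun i : Fin 2 => if i = 0 then A else B) :
    ∀ γ : FreeGroup (Fin 2), ∀ x ∉ Um ∪ Up ∪ Vm ∪ Vp, ∀ y ∉ Um ∪ Up ∪ Vm ∪ Vp,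
      dist (φ γ x) (φ γ y) ≤ Real.exp (-(κ * (lenA γ : ℝ))) * dist x y :=
  stmt16_general X κ Um Up Vm Vp hd1 hd2 hd3 hd4 hd5 hd6 A B hA1 hA2 hA3 hA4 hB1 hB2 hB3 hB4 φ hφ
end
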